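/- Let {Q_s}_{s≥2} be any family of polynomials Q_s ∈ ℚ[t] with Q_s(0) = 0, Q_s(1) ≠ 0 and deg Q_s ≤ s−1. Then the ℚ-linear span Z(Q,ℕ_{>1}) of all Z_Q(s_1,…,s_l) with l ≥ 0 and all s_i ≥ 2 equals MD^♯. In particular all such families of q-analogues of multiple zeta values span the same ℚ-subalgebra of ℚ⟦q⟧. -/

import Mathlib

open Polynomial

open scoped Classical

/-- The bracket `[s_1,…,s_l]` of Bachmann–Kühn: the generating series of multiple
divisor sums, defined coefficientwise. -/
noncomputable def bracket (l : ℕ) (s : Fin l → ℕ) : PowerSeries ℚ :=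
  PowerSeries.mk fun N =>
    (∏ j, ((s j - 1).factorial : ℚ))⁻¹ *
      ∑ uv ∈ ((Finset.Iic fun _ => N : Finset (Fin l → ℕ)) ×ˢ
            (Finset.Iic fun _ => N : Finset (Fin l → ℕ))).filter
          (fun uv => StrictAnti uv.1 ∧ (∀ j, 0 < uv.1 j) ∧ (∀ j, 0 < uv.2 j) ∧
            ∑ j, uv.1 j * uv.2 j = N),
        ∏ j, (uv.2 j : ℚ) ^ (s j - 1)

/-- `MD^♯`: the ℚ-span of all brackets with all entries ≥ 2 (including `[∅] = 1`). -/
noncomputable def MDsharp : Submodule ℚ (PowerSeries ℚ) :=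
  Submodule.span ℚ {f | ∃ (l : ℕ) (s : Fin l → ℕ), (∀ j, 2 ≤ s j) ∧ f = bracket l s}

/-- The q-analogue `Z_Q(s_1,…,s_l) = Σ_{n_1 > … > n_l > 0} ∏_j Q_{s_j}(q^{n_j})/(1-q^{n_j})^{s_j}`,
defined coefficientwise (the coefficient of `q^N` only receives contributions from
tuples with all `n_j ≤ N`, since `Q_s(0) = 0`). -/
noncomputable def ZQ (Q : ℕ → Polynomial ℚ) (l : ℕ) (s : Fin l → ℕ) : PowerSeries ℚ :=
  PowerSeries.mk fun N =>
    ∑ n ∈ ((Finset.Iic fun _ => N : Finset (Fin l → ℕ))).filter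
        (fun n => StrictAnti n ∧ ∀ j, 0 < n j),
      PowerSeries.coeff N
        (∏ j, Polynomial.aeval ((PowerSeries.X : PowerSeries ℚ) ^ n j) (Q (s j)) *
          ((1 - (PowerSeries.X : PowerSeries ℚ) ^ n j) ^ s j)⁻¹)

/-- Okounkov's polynomials `Q^O_s`. -/
noncomputable def QO (s : ℕ) : Polynomial ℚ :=
  if s % 2 = 0 then X ^ (s / 2) else X ^ ((s - 1) / 2) * (1 + X)

/-- The ℚ-span of Okounkov's q-multiple zeta values. -/
noncomputable def qMZV : Submodule ℚ (PowerSeries ℚ) :=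
  Submodule.span ℚ {f | ∃ (l : ℕ) (s : Fin l → ℕ), (∀ j, 2 ≤ s j) ∧ f = ZQ QO l s}

/-- Eulerian numbers `A(n,m)`. -/
def eulerianNumber (n m : ℕ) : ℚ :=
  ∑ j ∈ Finset.range (m + 1), (-1 : ℚ) ^ j * ((n + 1).choose j) * ((m + 1 - j : ℕ) : ℚ) ^ n

/-- The normalized Eulerian polynomials `Q^E_s(t) = t·P_{s-1}(t)/(s-1)!` (for `s ≥ 2`). -/
noncomputable def QE (s : ℕ) : Polynomial ℚ :=
  (((s - 1).factorial : ℚ)⁻¹) •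
    ∑ m ∈ Finset.range (s - 1), C (eulerianNumber (s - 1) m) * X ^ (m + 1)

/-- The coefficients `λ^j_{a,b}` (with Mathlib's `bernoulli`, for which `B_1 = -1/2`). -/
def lam (a b j : ℕ) : ℚ :=
  (-1 : ℚ) ^ (b - 1) * ((a + b - j - 1).choose (a - j)) * _root_.bernoulli (a + b - j) /
    (a + b - j).factorial

/-- The binomial polynomial `C(t+k-1-i, k-1) = (t+k-1-i)(t+k-2-i)⋯(t+1-i)/(k-1)!`. -/
noncomputable def binomPoly (k i : ℕ) : Polynomial ℚ :=
  (((k - 1).factorial : ℚ)⁻¹) •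
    ∏ a ∈ Finset.range (k - 1), (X + C ((k : ℚ) - 1 - (i : ℚ) - (a : ℚ)))

/-- The numbers `b^k_{i,j}`, defined by `Σ_j (b^k_{i,j}/j!) t^j = C(t+k-1-i, k-1)`. -/
noncomputable def bcoef (k i j : ℕ) : ℚ := (j.factorial : ℚ) * (binomPoly k i).coeff j

/-- The operator `d = q·(d/dq)` on `ℚ⟦q⟧`. -/
noncomputable def qd (f : PowerSeries ℚ) : PowerSeries ℚ :=
  PowerSeries.mk fun N => (N : ℚ) * PowerSeries.coeff N f


noncomputable def substn (n : ℕ) (f : PowerSeries ℚ) : PowerSeries ℚ :=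
  PowerSeries.mk fun m => if n ∣ m then PowerSeries.coeff (m / n) f else 0

lemma coeff_substn (n m : ℕ) (f : PowerSeries ℚ) :
    PowerSeries.coeff m (substn n f) = if n ∣ m then PowerSeries.coeff (m / n) f else 0 := by
  simp [substn]

lemma substn_add (n : ℕ) (f g : PowerSeries ℚ) :
    substn n (f + g) = substn n f + substn n g := by
  ext m; simp only [coeff_substn, map_add]; split <;> simp

lemma substn_smul (n : ℕ) (c : ℚ) (f : PowerSeries ℚ) :
    substn n (c • f) = c • substn n f := by
  ext m; simp only [coeff_substn, map_smul, PowerSeries.coeff_smul, smul_eq_mul]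
  split <;> simp

lemma substn_one {n : ℕ} (hn : 0 < n) : substn n 1 = 1 := by
  ext m
  simp only [coeff_substn, PowerSeries.coeff_one]
  rcases eq_or_ne m 0 with rfl | hm
  · simp [Nat.div_eq_of_lt, hn]
  · rw [if_neg hm]
    by_cases h : n ∣ m
    · rw [if_pos h, if_neg]
      rcases h with ⟨k, rfl⟩
      rw [Nat.mul_div_cancel_left _ hn]
      rintro rfl
      exact hm (by simp)
    · rw [if_neg h]

lemma substn_X {n : ℕ} (hn : 0 < n) : substn n PowerSeries.X = PowerSeries.X ^ n := by
  ext m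
  simp only [coeff_substn, PowerSeries.coeff_X, PowerSeries.coeff_X_pow]
  by_cases h : n ∣ m
  · rw [if_pos h]
    rcases h with ⟨k, rfl⟩
    rw [Nat.mul_div_cancel_left _ hn]
    by_cases hk : k = 1
    · subst hk; simp
    · rw [if_neg hk, if_neg]; intro he; exact hk (Nat.eq_of_mul_eq_mul_left hn (by omega))
  · rw [if_neg h, if_neg]; rintro rfl; exact h ⟨1, by ring⟩

lemma substn_mul {n : ℕ} (hn : 0 < n) (f g : PowerSeries ℚ) :
    substn n (f * g) = substn n f * substn n g := by
  ext m
  rw [PowerSeries.coeff_mul, coeff_substn]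
  by_cases h : n ∣ m
  · rw [if_pos h, PowerSeries.coeff_mul]
    rw [← Finset.sum_filter_of_ne
      (p := fun p : ℕ × ℕ => n ∣ p.1 ∧ n ∣ p.2)
      (f := fun p : ℕ × ℕ => PowerSeries.coeff p.1 (substn n f) *
        PowerSeries.coeff p.2 (substn n g))]
    · refine Finset.sum_nbij' (i := fun p : ℕ × ℕ => (n * p.1, n * p.2))
        (j := fun p : ℕ × ℕ => (p.1 / n, p.2 / n)) ?_ ?_ ?_ ?_ ?_
      · intro p hp
        simp only [Finset.HasAntidiagonal.mem_antidiagonal] at hp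
        simp only [Finset.mem_filter, Finset.HasAntidiagonal.mem_antidiagonal]
        exact ⟨by rw [← Nat.mul_add, hp, Nat.mul_div_cancel' h],
          ⟨p.1, rfl⟩, ⟨p.2, rfl⟩⟩
      · intro p hp
        simp only [Finset.mem_filter, Finset.HasAntidiagonal.mem_antidiagonal] at hp
        obtain ⟨hsum, h1, h2⟩ := hp
        simp only [Finset.HasAntidiagonal.mem_antidiagonal]
        rw [← Nat.add_div_of_dvd_right h1, hsum]
      · intro p hp
        simp [Nat.mul_div_cancel_left _ hn]
      · intro p hp
        simp only [Finset.mem_filter, Finset.HasAntidiagonal.mem_antidiagonal] at hp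
        obtain ⟨hsum, h1, h2⟩ := hp
        simp [Nat.mul_div_cancel' h1, Nat.mul_div_cancel' h2]
      · intro p hp
        simp only [coeff_substn, Nat.mul_div_cancel_left _ hn]
        simp [Nat.dvd_mul_right]
    · intro p hp hne
      constructor
      · by_contra hd
        rw [coeff_substn, if_neg hd, zero_mul] at hne
        exact hne rfl
      · by_contra hd
        rw [coeff_substn n p.2, if_neg hd, mul_zero] at hne
        exact hne rfl
  · rw [if_neg h]
    symm
    apply Finset.sum_eq_zero
    intro p hp
    simp only [Finset.HasAntidiagonal.mem_antidiagonal] at hp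
    rw [coeff_substn, coeff_substn]
    by_cases h1 : n ∣ p.1
    · rw [if_neg (fun h2 => h (hp ▸ Nat.dvd_add h1 h2))]
      ring
    · rw [if_neg h1, zero_mul]

lemma substn_pow {n : ℕ} (hn : 0 < n) (f : PowerSeries ℚ) (k : ℕ) :
    substn n (f ^ k) = substn n f ^ k := by
  induction k with
  | zero => simpa using substn_one hn
  | succ k ih => rw [pow_succ, pow_succ, substn_mul hn, ih]

lemma substn_sub (n : ℕ) (f g : PowerSeries ℚ) :
    substn n (f - g) = substn n f - substn n g := by
  ext m; simp only [coeff_substn, map_sub]; split <;> simp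

lemma substn_oneSubX {n : ℕ} (hn : 0 < n) :
    substn n (1 - PowerSeries.X) = 1 - PowerSeries.X ^ n := by
  rw [substn_sub, substn_one hn, substn_X hn]

lemma substn_aeval {n : ℕ} (hn : 0 < n) (p : Polynomial ℚ) :
    substn n (Polynomial.aeval (PowerSeries.X : PowerSeries ℚ) p) =
      Polynomial.aeval ((PowerSeries.X : PowerSeries ℚ) ^ n) p := by
  induction p using Polynomial.induction_on' with
  | add p q hp hq => rw [map_add, substn_add, hp, hq, map_add]
  | monomial k c =>
      rw [Polynomial.aeval_monomial, Polynomial.aeval_monomial, substn_mul hn,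
        substn_pow hn, substn_X hn]
      congr 1
      have : (algebraMap ℚ (PowerSeries ℚ)) c = c • (1 : PowerSeries ℚ) := by
        rw [Algebra.algebraMap_eq_smul_one]
      rw [this, substn_smul, substn_one hn]

lemma constC_oneSubXn_pow {n s : ℕ} (hn : 0 < n) :
    PowerSeries.constantCoeff ((1 - (PowerSeries.X : PowerSeries ℚ) ^ n) ^ s) ≠ 0 := by
  rw [map_pow, map_sub, map_one, map_pow, PowerSeries.constantCoeff_X]
  simp [zero_pow hn.ne']

lemma substn_inv_oneSubX_pow {n : ℕ} (hn : 0 < n) (s : ℕ) :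
    substn n (((1 - PowerSeries.X) ^ s)⁻¹) = ((1 - (PowerSeries.X : PowerSeries ℚ) ^ n) ^ s)⁻¹ := by
  have h1 : PowerSeries.constantCoeff ((1 - (PowerSeries.X : PowerSeries ℚ)) ^ s) ≠ 0 := by
    simpa using constC_oneSubXn_pow (n := 1) (s := s) one_pos
  have hmul : (((1 : PowerSeries ℚ) - PowerSeries.X) ^ s) * (((1 : PowerSeries ℚ) - PowerSeries.X) ^ s)⁻¹ = 1 :=
    PowerSeries.mul_inv_cancel _ h1
  have := congrArg (substn n) hmul
  rw [substn_mul hn, substn_pow hn, substn_oneSubX hn, substn_one hn] at this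
  rw [PowerSeries.eq_inv_iff_mul_eq_one (constC_oneSubXn_pow hn)]
  rw [mul_comm] at this
  exact this

lemma coeff_zero_oneSubX_mul (f : PowerSeries ℚ) :
    PowerSeries.coeff 0 ((1 - PowerSeries.X) * f) = PowerSeries.coeff 0 f := by
  rw [sub_mul, one_mul, map_sub, PowerSeries.coeff_zero_X_mul, sub_zero]

lemma coeff_succ_oneSubX_mul (v : ℕ) (f : PowerSeries ℚ) :
    PowerSeries.coeff (v + 1) ((1 - PowerSeries.X) * f) =
      PowerSeries.coeff (v + 1) f - PowerSeries.coeff v f := by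
  rw [sub_mul, one_mul, map_sub, PowerSeries.coeff_succ_X_mul]

lemma Abase : ∀ i : ℕ,
    (1 - PowerSeries.X) ^ (i + 1) * PowerSeries.mk (fun v => (Nat.choose v i : ℚ)) =
      (PowerSeries.X : PowerSeries ℚ) ^ i
  | 0 => by
      ext m
      rcases m with _ | v
      · simp [coeff_zero_oneSubX_mul]
      · simp [coeff_succ_oneSubX_mul]
  | (i + 1) => by
      have step : (1 - PowerSeries.X) * PowerSeries.mk (fun v => (Nat.choose v (i+1) : ℚ)) =
          PowerSeries.X * PowerSeries.mk (fun v => (Nat.choose v i : ℚ)) := by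
        ext m
        rcases m with _ | v
        · simp [coeff_zero_oneSubX_mul]
        · rw [coeff_succ_oneSubX_mul, PowerSeries.coeff_succ_X_mul]
          simp only [PowerSeries.coeff_mk]
          rw [Nat.choose_succ_succ']
          push_cast
          ring
      calc (1 - PowerSeries.X) ^ (i + 1 + 1) *
            PowerSeries.mk (fun v => (Nat.choose v (i+1) : ℚ))
          = (1 - PowerSeries.X) ^ (i + 1) *
            ((1 - PowerSeries.X) * PowerSeries.mk (fun v => (Nat.choose v (i+1) : ℚ))) := by ring
        _ = (1 - PowerSeries.X) ^ (i + 1) *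
            (PowerSeries.X * PowerSeries.mk (fun v => (Nat.choose v i : ℚ))) := by rw [step]
        _ = PowerSeries.X * ((1 - PowerSeries.X) ^ (i + 1) *
            PowerSeries.mk (fun v => (Nat.choose v i : ℚ))) := by ring
        _ = PowerSeries.X * PowerSeries.X ^ i := by rw [Abase i]
        _ = PowerSeries.X ^ (i + 1) := by ring

lemma AA (i : ℕ) : ∀ k : ℕ,
    (1 - PowerSeries.X) ^ (i + k + 1) *
      PowerSeries.mk (fun v => (Nat.choose (v + k) (i + k) : ℚ)) =
      (PowerSeries.X : PowerSeries ℚ) ^ i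
  | 0 => by simpa using Abase i
  | (k + 1) => by
      have step : (1 - PowerSeries.X) *
          PowerSeries.mk (fun v => (Nat.choose (v + (k+1)) (i + (k+1)) : ℚ)) =
          PowerSeries.mk (fun v => (Nat.choose (v + k) (i + k) : ℚ)) := by
        ext m
        rcases m with _ | v
        · rw [coeff_zero_oneSubX_mul]
          simp only [PowerSeries.coeff_mk, Nat.zero_add]
          rcases Nat.eq_zero_or_pos i with rfl | hi
          · simp
          · rw [Nat.choose_eq_zero_of_lt (by omega), Nat.choose_eq_zero_of_lt (by omega)]
        · rw [coeff_succ_oneSubX_mul]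
          simp only [PowerSeries.coeff_mk]
          have : v + 1 + (k + 1) = (v + (k + 1)) + 1 := by omega
          rw [this]
          have : i + (k + 1) = (i + k) + 1 := by omega
          rw [this, Nat.choose_succ_succ' (v + (k+1)) (i + k)]
          have : v + 1 + k = v + (k + 1) := by omega
          rw [this]
          push_cast
          ring
      calc (1 - PowerSeries.X) ^ (i + (k + 1) + 1) *
            PowerSeries.mk (fun v => (Nat.choose (v + (k+1)) (i + (k+1)) : ℚ))
          = (1 - PowerSeries.X) ^ (i + k + 1) * ((1 - PowerSeries.X) *
            PowerSeries.mk (fun v => (Nat.choose (v + (k+1)) (i + (k+1)) : ℚ))) := by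
            rw [show i + (k+1) + 1 = (i + k + 1) + 1 by omega]; ring
        _ = (1 - PowerSeries.X) ^ (i + k + 1) *
            PowerSeries.mk (fun v => (Nat.choose (v + k) (i + k) : ℚ)) := by rw [step]
        _ = (PowerSeries.X : PowerSeries ℚ) ^ i := AA i k

lemma invform {s i : ℕ} (hs : 1 ≤ s) (hi : i ≤ s - 1) :
    (PowerSeries.X : PowerSeries ℚ) ^ i * (((1 - PowerSeries.X) ^ s)⁻¹) =
      PowerSeries.mk (fun v => (Nat.choose (v + (s - 1) - i) (s - 1) : ℚ)) := by
  have h0 := AA i (s - 1 - i)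
  have he1 : i + (s - 1 - i) + 1 = s := by omega
  have he2 : i + (s - 1 - i) = s - 1 := by omega
  rw [he1, he2] at h0
  have h0' : (1 - PowerSeries.X) ^ s *
      PowerSeries.mk (fun v => (Nat.choose (v + (s - 1) - i) (s - 1) : ℚ)) =
      (PowerSeries.X : PowerSeries ℚ) ^ i := by
    rw [← h0]
    have hfun : ∀ v : ℕ, v + (s - 1) - i = v + (s - 1 - i) := fun v => by omega
    simp only [hfun]
  have hc : PowerSeries.constantCoeff (((1 : PowerSeries ℚ) - PowerSeries.X) ^ s) ≠ 0 := by
    simpa using constC_oneSubXn_pow (n := 1) (s := s) one_pos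
  calc (PowerSeries.X : PowerSeries ℚ) ^ i * (((1 - PowerSeries.X) ^ s)⁻¹)
      = ((1 - PowerSeries.X) ^ s *
          PowerSeries.mk (fun v => (Nat.choose (v + (s - 1) - i) (s - 1) : ℚ))) *
          (((1 - PowerSeries.X) ^ s)⁻¹) := by rw [h0']
    _ = PowerSeries.mk (fun v => (Nat.choose (v + (s - 1) - i) (s - 1) : ℚ)) *
          ((1 - PowerSeries.X) ^ s * (((1 - PowerSeries.X) ^ s)⁻¹)) := by ring
    _ = _ := by rw [PowerSeries.mul_inv_cancel _ hc, mul_one]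

/-- The binomial polynomial (copy of pinned def, used here). -/
noncomputable def binomPoly' (k i : ℕ) : Polynomial ℚ :=
  (((k - 1).factorial : ℚ)⁻¹) •
    ∏ a ∈ Finset.range (k - 1), (X + C ((k : ℚ) - 1 - (i : ℚ) - (a : ℚ)))

lemma binomPoly'_eval {k i : ℕ} (hk : 1 ≤ k) (hi : i ≤ k - 1) (v : ℕ) :
    (binomPoly' k i).eval (v : ℚ) = (Nat.choose (v + (k - 1) - i) (k - 1) : ℚ) := by
  set m := k - 1 with hm
  have hkm : ((m : ℕ) : ℚ) = (k : ℚ) - 1 := by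
    rw [hm, Nat.cast_sub hk]; norm_num
  rw [binomPoly', eval_smul, smul_eq_mul]
  rw [eval_prod]
  simp only [eval_add, eval_X, eval_C]
  by_cases hv : i ≤ v
  · have hcast : ∀ a ∈ Finset.range m, (v : ℚ) + ((k : ℚ) - 1 - (i : ℚ) - (a : ℚ))
        = ((v + m - i - a : ℕ) : ℚ) := by
      intro a ha
      rw [Finset.mem_range] at ha
      have h2 : a ≤ v + m - i := by omega
      have h1 : i ≤ v + m := by omega
      rw [Nat.cast_sub h2, Nat.cast_sub h1]
      push_cast [hkm]
      ring
    rw [Finset.prod_congr rfl hcast, ← Nat.cast_prod,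
      ← Nat.descFactorial_eq_prod_range, Nat.descFactorial_eq_factorial_mul_choose]
    push_cast
    rw [← mul_assoc, inv_mul_cancel₀ (by positivity : ((m.factorial : ℚ)) ≠ 0), one_mul]
  · have ha0 : v + m - i ∈ Finset.range m := by
      rw [Finset.mem_range]; omega
    rw [Finset.prod_eq_zero ha0]
    · rw [Nat.choose_eq_zero_of_lt (by omega), Nat.cast_zero, mul_zero]
    · have h1 : i ≤ v + m := by omega
      rw [Nat.cast_sub h1]
      push_cast [hkm]
      ring

lemma binomPoly'_coeff_zero_of_lt {k i j : ℕ} (hj : k - 1 < j) :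
    (binomPoly' k i).coeff j = 0 := by
  rw [binomPoly', Polynomial.coeff_smul]
  have hmon : (∏ a ∈ Finset.range (k - 1),
      (X + C ((k : ℚ) - 1 - (i : ℚ) - (a : ℚ)))).Monic :=
    Polynomial.monic_prod_of_monic _ _ (fun a _ => Polynomial.monic_X_add_C _)
  have hdeg : (∏ a ∈ Finset.range (k - 1),
      (X + C ((k : ℚ) - 1 - (i : ℚ) - (a : ℚ)))).natDegree = k - 1 := by
    rw [Polynomial.natDegree_prod]
    · simp only [Polynomial.natDegree_X_add_C, Finset.sum_const, smul_eq_mul, mul_one,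
        Finset.card_range]
    · intro a _
      exact (Polynomial.monic_X_add_C _).ne_zero
  rw [Polynomial.coeff_eq_zero_of_natDegree_lt (by rw [hdeg]; exact hj), smul_zero]

lemma binomPoly'_coeff_top (k i : ℕ) :
    (binomPoly' k i).coeff (k - 1) = ((k - 1).factorial : ℚ)⁻¹ := by
  rw [binomPoly', Polynomial.coeff_smul]
  have hmon : (∏ a ∈ Finset.range (k - 1),
      (X + C ((k : ℚ) - 1 - (i : ℚ) - (a : ℚ)))).Monic :=
    Polynomial.monic_prod_of_monic _ _ (fun a _ => Polynomial.monic_X_add_C _)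
  have hdeg : (∏ a ∈ Finset.range (k - 1),
      (X + C ((k : ℚ) - 1 - (i : ℚ) - (a : ℚ)))).natDegree = k - 1 := by
    rw [Polynomial.natDegree_prod]
    · simp only [Polynomial.natDegree_X_add_C, Finset.sum_const, smul_eq_mul, mul_one,
        Finset.card_range]
    · intro a _
      exact (Polynomial.monic_X_add_C _).ne_zero
  have h1 := hmon.coeff_natDegree
  rw [hdeg] at h1
  rw [h1, smul_eq_mul, mul_one]

noncomputable def PP (q : Polynomial ℚ) (s : ℕ) : Polynomial ℚ :=
  ∑ i ∈ q.support, q.coeff i • binomPoly' s i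

section PPfacts
variable {q : Polynomial ℚ} {s : ℕ} (hs : 2 ≤ s) (hq0 : q.eval 0 = 0)
  (hqd : q.degree ≤ ((s - 1 : ℕ) : WithBot ℕ))

include hs hqd in
lemma PP_support_le : ∀ i ∈ q.support, i ≤ s - 1 := by
  intro i hi
  have h1 : q.natDegree ≤ s - 1 := Polynomial.natDegree_le_iff_degree_le.mpr hqd
  exact le_trans (Polynomial.le_natDegree_of_mem_supp i hi) h1

include hq0 in
lemma PP_support_pos : ∀ i ∈ q.support, 1 ≤ i := by
  intro i hi
  rcases Nat.eq_zero_or_pos i with rfl | h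
  · exfalso
    rw [Polynomial.mem_support_iff] at hi
    exact hi (by rwa [Polynomial.coeff_zero_eq_eval_zero])
  · exact h

include hs hqd in
lemma PP_eval (v : ℕ) : (PP q s).eval (v : ℚ) =
    ∑ i ∈ q.support, q.coeff i * (Nat.choose (v + (s - 1) - i) (s - 1) : ℚ) := by
  rw [PP, Polynomial.eval_finset_sum]
  refine Finset.sum_congr rfl fun i hi => ?_
  rw [eval_smul, smul_eq_mul, binomPoly'_eval (by omega) (PP_support_le hs hqd i hi)]

include hs hqd hq0 in
lemma PP_eval_zero : (PP q s).eval ((0 : ℕ) : ℚ) = 0 := by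
  rw [PP_eval hs hqd]
  apply Finset.sum_eq_zero
  intro i hi
  rw [Nat.choose_eq_zero_of_lt (by have := PP_support_pos hq0 i hi; omega)]
  simp

lemma q_eval_one : q.eval 1 = ∑ i ∈ q.support, q.coeff i := by
  rw [Polynomial.eval_eq_sum, Polynomial.sum]
  simp

include hs hqd in
lemma PP_coeff_top : (PP q s).coeff (s - 1) = q.eval 1 * (((s - 1).factorial : ℚ))⁻¹ := by
  rw [PP, Polynomial.finset_sum_coeff, q_eval_one, Finset.sum_mul]
  refine Finset.sum_congr rfl fun i hi => ?_
  rw [Polynomial.coeff_smul, binomPoly'_coeff_top, smul_eq_mul]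

lemma PP_coeff_zero_of_lt {j : ℕ} (hj : s - 1 < j) : (PP q s).coeff j = 0 := by
  rw [PP, Polynomial.finset_sum_coeff]
  apply Finset.sum_eq_zero
  intro i hi
  rw [Polynomial.coeff_smul, binomPoly'_coeff_zero_of_lt hj, smul_zero]

include hs hqd in
lemma PP_natDegree (hq1 : q.eval 1 ≠ 0) : (PP q s).natDegree = s - 1 ∧ (PP q s) ≠ 0 := by
  have hne : (PP q s).coeff (s - 1) ≠ 0 := by
    rw [PP_coeff_top hs hqd]
    exact mul_ne_zero hq1 (by positivity)
  have hPP : (PP q s) ≠ 0 := fun h => hne (by simp [h])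
  refine ⟨le_antisymm ?_ (Polynomial.le_natDegree_of_ne_zero hne), hPP⟩
  rw [Polynomial.natDegree_le_iff_coeff_eq_zero]
  exact fun m hm => PP_coeff_zero_of_lt hm

end PPfacts

lemma PPseries {q : Polynomial ℚ} {s : ℕ} (hs : 2 ≤ s) (hq0 : q.eval 0 = 0)
    (hqd : q.degree ≤ ((s - 1 : ℕ) : WithBot ℕ)) :
    Polynomial.aeval (PowerSeries.X : PowerSeries ℚ) q * (((1 - PowerSeries.X) ^ s)⁻¹) =
      PowerSeries.mk (fun v => (PP q s).eval ((v : ℕ) : ℚ)) := by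
  conv_lhs => rw [q.as_sum_support]
  rw [map_sum, Finset.sum_mul]
  have hterm : ∀ i ∈ q.support,
      Polynomial.aeval (PowerSeries.X : PowerSeries ℚ) (Polynomial.monomial i (q.coeff i)) *
        (((1 - PowerSeries.X) ^ s)⁻¹) =
      q.coeff i • PowerSeries.mk (fun v => (Nat.choose (v + (s-1) - i) (s-1) : ℚ)) := by
    intro i hi
    rw [Polynomial.aeval_monomial, ← invform (by omega) (PP_support_le hs hqd i hi)]
    rw [Algebra.algebraMap_eq_smul_one, smul_mul_assoc, smul_mul_assoc, one_mul]
  rw [Finset.sum_congr rfl hterm]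
  ext m
  rw [map_sum, PowerSeries.coeff_mk, PP_eval hs hqd]
  refine Finset.sum_congr rfl fun i hi => ?_
  rw [PowerSeries.coeff_smul, PowerSeries.coeff_mk, smul_eq_mul]

lemma slot {q : Polynomial ℚ} {s n : ℕ} (hs : 2 ≤ s) (hq0 : q.eval 0 = 0)
    (hqd : q.degree ≤ ((s - 1 : ℕ) : WithBot ℕ)) (hn : 0 < n) :
    Polynomial.aeval ((PowerSeries.X : PowerSeries ℚ) ^ n) q *
      (((1 - PowerSeries.X ^ n) ^ s)⁻¹) =
      substn n (PowerSeries.mk (fun v => (PP q s).eval ((v : ℕ) : ℚ))) := by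
  rw [← PPseries hs hq0 hqd, substn_mul hn, substn_aeval hn, substn_inv_oneSubX_pow hn]

noncomputable def Bk (l : ℕ) (P : Fin l → Polynomial ℚ) : PowerSeries ℚ :=
  PowerSeries.mk fun N =>
    ∑ uv ∈ ((Finset.Iic fun _ => N : Finset (Fin l → ℕ)) ×ˢ
          (Finset.Iic fun _ => N : Finset (Fin l → ℕ))).filter
        (fun uv => StrictAnti uv.1 ∧ (∀ j, 0 < uv.1 j) ∧ (∀ j, 0 < uv.2 j) ∧
          ∑ j, uv.1 j * uv.2 j = N),
      ∏ j, (P j).eval ((uv.2 j : ℚ))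

lemma bracket_eq (l : ℕ) (s : Fin l → ℕ) :
    bracket l s = (∏ j, ((s j - 1).factorial : ℚ))⁻¹ •
      Bk l (fun j => (X : Polynomial ℚ) ^ (s j - 1)) := by
  ext N
  rw [bracket, Bk, PowerSeries.coeff_smul, PowerSeries.coeff_mk, PowerSeries.coeff_mk,
    smul_eq_mul]
  congr 1
  refine Finset.sum_congr rfl fun uv _ => Finset.prod_congr rfl fun j _ => ?_
  rw [Polynomial.eval_pow, Polynomial.eval_X]

lemma ZQ_eq (Q : ℕ → Polynomial ℚ) (l : ℕ) (s : Fin l → ℕ)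
    (hs : ∀ j, 2 ≤ s j)
    (h0 : ∀ j, (Q (s j)).eval 0 = 0)
    (hdeg : ∀ j, (Q (s j)).degree ≤ ((s j - 1 : ℕ) : WithBot ℕ)) :
    ZQ Q l s = Bk l (fun j => PP (Q (s j)) (s j)) := by
  classical
  ext N
  rw [ZQ, Bk, PowerSeries.coeff_mk, PowerSeries.coeff_mk]
  set c : Fin l → ℕ → ℚ := fun j v => (PP (Q (s j)) (s j)).eval ((v : ℕ) : ℚ) with hc
  set A := (Finset.Iic fun _ => N : Finset (Fin l → ℕ)).filter
    (fun n => StrictAnti n ∧ ∀ j, 0 < n j) with hA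
  have hc0 : ∀ j, c j 0 = 0 := fun j => PP_eval_zero (hs j) (h0 j) (hdeg j)
  have hstep1 : ∀ n ∈ A,
      PowerSeries.coeff N
        (∏ j, Polynomial.aeval ((PowerSeries.X : PowerSeries ℚ) ^ n j) (Q (s j)) *
          ((1 - (PowerSeries.X : PowerSeries ℚ) ^ n j) ^ s j)⁻¹) =
      ∑ f ∈ Finset.finsuppAntidiag Finset.univ N,
        ∏ j, (if n j ∣ f j then c j (f j / n j) else 0) := by
    intro n hn
    have hpos : ∀ j, 0 < n j := by
      rw [hA, Finset.mem_filter] at hn; exact hn.2.2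
    have hprod : (∏ j, Polynomial.aeval ((PowerSeries.X : PowerSeries ℚ) ^ n j) (Q (s j)) *
          ((1 - (PowerSeries.X : PowerSeries ℚ) ^ n j) ^ s j)⁻¹)
        = ∏ j, substn (n j) (PowerSeries.mk fun v => c j v) := by
      refine Finset.prod_congr rfl fun j _ => ?_
      exact slot (hs j) (h0 j) (hdeg j) (hpos j)
    rw [hprod, PowerSeries.coeff_prod]
    refine Finset.sum_congr rfl fun f hf => Finset.prod_congr rfl fun j _ => ?_
    rw [coeff_substn]
    split_ifs with h
    · rw [PowerSeries.coeff_mk]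
    · rfl
  rw [Finset.sum_congr rfl hstep1, ← Finset.sum_product']
  set pred : (Fin l → ℕ) × (Fin l →₀ ℕ) → Prop :=
    fun p => ∀ j, p.1 j ∣ p.2 j ∧ p.2 j ≠ 0 with hpred
  rw [← Finset.sum_filter_of_ne (p := pred)
    (f := fun p : (Fin l → ℕ) × (Fin l →₀ ℕ) =>
      ∏ j, (if p.1 j ∣ p.2 j then c j (p.2 j / p.1 j) else 0))]
  swap
  · intro p hp hne j
    by_contra hcon
    push_neg at hcon
    apply hne
    by_cases hd : p.1 j ∣ p.2 j
    · refine Finset.prod_eq_zero (Finset.mem_univ j) ?_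
      rw [if_pos hd, hcon hd, Nat.zero_div, hc0]
    · exact Finset.prod_eq_zero (Finset.mem_univ j) (if_neg hd)
  refine Finset.sum_nbij'
    (i := fun p : (Fin l → ℕ) × (Fin l →₀ ℕ) => ((p.1, fun j => p.2 j / p.1 j) :
      (Fin l → ℕ) × (Fin l → ℕ)))
    (j := fun p : (Fin l → ℕ) × (Fin l → ℕ) =>
      ((p.1, Finsupp.equivFunOnFinite.symm (fun j => p.1 j * p.2 j)) :
        (Fin l → ℕ) × (Fin l →₀ ℕ)))
    ?_ ?_ ?_ ?_ ?_
  · -- maps into Bk's index set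
    rintro ⟨n, f⟩ hp
    rw [Finset.mem_filter, Finset.mem_product] at hp
    obtain ⟨⟨hnA, hfF⟩, hpd⟩ := hp
    rw [hA, Finset.mem_filter] at hnA
    obtain ⟨hnI, hsa, hposn⟩ := hnA
    rw [Finset.mem_finsuppAntidiag] at hfF
    have hfsum : ∑ j, f j = N := hfF.1
    have hfle : ∀ j, f j ≤ N := by
      intro j
      rw [← hfsum]
      exact Finset.single_le_sum (fun i _ => Nat.zero_le _) (Finset.mem_univ j)
    rw [Finset.mem_filter, Finset.mem_product]
    refine ⟨⟨hnI, ?_⟩, hsa, hposn, ?_, ?_⟩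
    · rw [Finset.mem_Iic]
      intro j
      exact le_trans (Nat.div_le_self _ _) (hfle j)
    · intro j
      have hd := (hpd j).1
      have hne := (hpd j).2
      exact Nat.div_pos (Nat.le_of_dvd (Nat.pos_of_ne_zero hne) hd) (hposn j)
    · calc ∑ j, n j * (f j / n j) = ∑ j, f j := by
            refine Finset.sum_congr rfl fun j _ => Nat.mul_div_cancel' (hpd j).1
        _ = N := hfsum
  · -- reverse direction
    rintro ⟨u, v⟩ hp
    rw [Finset.mem_filter, Finset.mem_product] at hp
    obtain ⟨⟨huI, hvI⟩, hsa, hposu, hposv, hsum⟩ := hp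
    rw [Finset.mem_filter, Finset.mem_product]
    refine ⟨⟨?_, ?_⟩, ?_⟩
    · rw [hA, Finset.mem_filter]
      exact ⟨huI, hsa, hposu⟩
    · rw [Finset.mem_finsuppAntidiag]
      constructor
      · simpa using hsum
      · exact Finset.subset_univ _
    · intro j
      simp only [Finsupp.coe_equivFunOnFinite_symm]
      exact ⟨Dvd.intro _ rfl, Nat.mul_ne_zero (hposu j).ne' (hposv j).ne'⟩
  · -- left inverse
    rintro ⟨n, f⟩ hp
    rw [Finset.mem_filter, Finset.mem_product] at hp
    obtain ⟨⟨hnA, hfF⟩, hpd⟩ := hp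
    have h2 : (fun j => n j * (f j / n j)) = ⇑f := by
      funext j
      exact Nat.mul_div_cancel' (hpd j).1
    have h3 : Finsupp.equivFunOnFinite.symm (fun j => n j * (f j / n j)) = f := by
      rw [h2]
      exact Finsupp.equivFunOnFinite.symm_apply_apply f
    exact congrArg₂ Prod.mk rfl h3
  · -- right inverse
    rintro ⟨u, v⟩ hp
    rw [Finset.mem_filter, Finset.mem_product] at hp
    obtain ⟨⟨huI, hvI⟩, hsa, hposu, hposv, hsum⟩ := hp
    have h3 : (fun j => (Finsupp.equivFunOnFinite.symm (fun j => u j * v j)) j / u j) = v := by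
      funext j
      simp only [Finsupp.coe_equivFunOnFinite_symm]
      exact Nat.mul_div_cancel_left _ (hposu j)
    exact congrArg₂ Prod.mk rfl h3
  · -- values agree
    rintro ⟨n, f⟩ hp
    rw [Finset.mem_filter, Finset.mem_product] at hp
    obtain ⟨⟨hnA, hfF⟩, hpd⟩ := hp
    refine Finset.prod_congr rfl fun j _ => ?_
    rw [if_pos (hpd j).1]

lemma Bk_prod_update (l : ℕ) (P : Fin l → Polynomial ℚ) (a : Fin l) (x : Polynomial ℚ)
    (v : Fin l → ℕ) :
    (∏ j, ((Function.update P a x) j).eval ((v j : ℚ))) =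
      x.eval ((v a : ℚ)) * ∏ j ∈ Finset.univ \ {a}, (P j).eval ((v j : ℚ)) := by
  have h : (fun j => ((Function.update P a x) j).eval ((v j : ℚ))) =
      Function.update (fun j => (P j).eval ((v j : ℚ))) a (x.eval ((v a : ℚ))) := by
    funext j
    rcases eq_or_ne j a with rfl | hj
    · simp
    · simp [Function.update_of_ne hj]
  rw [h, Finset.prod_update_of_mem (Finset.mem_univ a)]

lemma Bk_update_add (l : ℕ) (P : Fin l → Polynomial ℚ) (a : Fin l) (x y : Polynomial ℚ) :
    Bk l (Function.update P a (x + y)) =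
      Bk l (Function.update P a x) + Bk l (Function.update P a y) := by
  ext N
  rw [map_add, Bk, Bk, Bk, PowerSeries.coeff_mk, PowerSeries.coeff_mk, PowerSeries.coeff_mk,
    ← Finset.sum_add_distrib]
  refine Finset.sum_congr rfl fun uv _ => ?_
  rw [Bk_prod_update, Bk_prod_update, Bk_prod_update, Polynomial.eval_add, add_mul]

lemma Bk_update_smul (l : ℕ) (P : Fin l → Polynomial ℚ) (a : Fin l) (c : ℚ) (x : Polynomial ℚ) :
    Bk l (Function.update P a (c • x)) = c • Bk l (Function.update P a x) := by
  ext N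
  rw [PowerSeries.coeff_smul, Bk, Bk, PowerSeries.coeff_mk, PowerSeries.coeff_mk, smul_eq_mul,
    Finset.mul_sum]
  refine Finset.sum_congr rfl fun uv _ => ?_
  rw [Bk_prod_update, Bk_prod_update, Polynomial.eval_smul, smul_eq_mul, mul_assoc]

lemma Bk_mem_span (l : ℕ) (S : Set (Polynomial ℚ)) (P : Fin l → Polynomial ℚ)
    (hP : ∀ j, P j ∈ Submodule.span ℚ S) :
    Bk l P ∈ Submodule.span ℚ
      {f | ∃ P' : Fin l → Polynomial ℚ, (∀ j, P' j ∈ S) ∧ f = Bk l P'} := by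
  classical
  suffices h : ∀ (t : Finset (Fin l)) (P : Fin l → Polynomial ℚ),
      (∀ j, P j ∈ Submodule.span ℚ S) → (∀ j, j ∉ t → P j ∈ S) →
      Bk l P ∈ Submodule.span ℚ
        {f | ∃ P' : Fin l → Polynomial ℚ, (∀ j, P' j ∈ S) ∧ f = Bk l P'} by
    exact h Finset.univ P hP (fun j hj => absurd (Finset.mem_univ j) hj)
  intro t
  induction t using Finset.induction_on with
  | empty =>
      intro P hP hout
      exact Submodule.subset_span ⟨P, fun j => hout j (Finset.notMem_empty j), rfl⟩
  | @insert a t ha ih =>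
      intro P hP hout
      have hPa : P a ∈ Submodule.span ℚ S := hP a
      have key : ∀ (x : Polynomial ℚ), x ∈ Submodule.span ℚ S →
          Bk l (Function.update P a x) ∈ Submodule.span ℚ
            {f | ∃ P' : Fin l → Polynomial ℚ, (∀ j, P' j ∈ S) ∧ f = Bk l P'} := by
        intro x hx
        induction hx using Submodule.span_induction with
        | mem y hy =>
            apply ih
            · intro j
              rcases eq_or_ne j a with rfl | hj
              · rw [Function.update_self]
                exact Submodule.subset_span hy
              · rw [Function.update_of_ne hj]
                exact hP j
            · intro j hj
              rcases eq_or_ne j a with rfl | hje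
              · rw [Function.update_self]
                exact hy
              · rw [Function.update_of_ne hje]
                exact hout j (by simp [Finset.mem_insert, hje, hj])
        | zero =>
            have h0 : Bk l (Function.update P a 0) = 0 := by
              have := Bk_update_smul l P a 0 0
              simpa using this
            rw [h0]
            exact Submodule.zero_mem _
        | add y z hy hz hy' hz' =>
            rw [Bk_update_add]
            exact Submodule.add_mem _ hy' hz'
        | smul c y hy hy' =>
            rw [Bk_update_smul]
            exact Submodule.smul_mem _ c hy'
      have := key (P a) hPa
      rwa [Function.update_eq_self] at this


lemma mem_span_monomials (p : Polynomial ℚ) (hp : p.coeff 0 = 0) :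
    p ∈ Submodule.span ℚ {q : Polynomial ℚ | ∃ k, 1 ≤ k ∧ q = (X : Polynomial ℚ) ^ k} := by
  have hmem : (∑ i ∈ p.support, Polynomial.monomial i (p.coeff i)) ∈
      Submodule.span ℚ {q : Polynomial ℚ | ∃ k, 1 ≤ k ∧ q = (X : Polynomial ℚ) ^ k} := by
    refine Submodule.sum_mem _ fun i hi => ?_
    rw [← Polynomial.smul_X_eq_monomial]
    refine Submodule.smul_mem _ _ (Submodule.subset_span ?_)
    refine ⟨i, ?_, rfl⟩
    rcases Nat.eq_zero_or_pos i with rfl | h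
    · exact absurd hp (Polynomial.mem_support_iff.mp hi)
    · exact h
  rwa [← p.as_sum_support] at hmem

lemma mem_span_triangular (F : ℕ → Polynomial ℚ)
    (hd : ∀ s, 2 ≤ s → (F s).natDegree = s - 1 ∧ F s ≠ 0)
    (h0 : ∀ s, 2 ≤ s → (F s).coeff 0 = 0) :
    ∀ p : Polynomial ℚ, p.coeff 0 = 0 →
      p ∈ Submodule.span ℚ {q : Polynomial ℚ | ∃ s, 2 ≤ s ∧ q = F s} := by
  suffices h : ∀ (d : ℕ) (p : Polynomial ℚ), p.natDegree = d → p.coeff 0 = 0 →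
      p ∈ Submodule.span ℚ {q : Polynomial ℚ | ∃ s, 2 ≤ s ∧ q = F s} by
    exact fun p hp => h p.natDegree p rfl hp
  intro d
  induction d using Nat.strong_induction_on with
  | _ d ih =>
    intro p hn hp0
    rcases eq_or_ne p 0 with rfl | hp
    · exact Submodule.zero_mem _
    have hdpos : 1 ≤ d := by
      rcases Nat.eq_zero_or_pos d with rfl | h
      · exfalso
        apply hp
        have hC := Polynomial.eq_C_of_natDegree_eq_zero hn
        rw [hC]
        rw [hC, Polynomial.coeff_C_zero] at hp0
        rw [hp0, map_zero]
      · exact h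
    set sdeg := d + 1 with hsdeg
    have hs2 : 2 ≤ sdeg := by omega
    obtain ⟨hFdeg, hFne⟩ := hd sdeg hs2
    have hFd : (F sdeg).natDegree = d := by omega
    set c := p.leadingCoeff / (F sdeg).leadingCoeff with hcdef
    have hFlne : (F sdeg).leadingCoeff ≠ 0 := Polynomial.leadingCoeff_ne_zero.mpr hFne
    have hplne : p.leadingCoeff ≠ 0 := Polynomial.leadingCoeff_ne_zero.mpr hp
    have hcne : c ≠ 0 := div_ne_zero hplne hFlne
    have hdegp : p.degree = (d : WithBot ℕ) := by
      rw [Polynomial.degree_eq_natDegree hp, hn]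
    have hdegF : (C c * F sdeg).degree = (d : WithBot ℕ) := by
      rw [Polynomial.degree_mul, Polynomial.degree_C hcne,
        Polynomial.degree_eq_natDegree hFne, hFd]
      simp
    have hlceq : p.leadingCoeff = (C c * F sdeg).leadingCoeff := by
      rw [Polynomial.leadingCoeff_mul, Polynomial.leadingCoeff_C, hcdef,
        div_mul_cancel₀ _ hFlne]
    have hmemF : C c * F sdeg ∈ Submodule.span ℚ
        {q : Polynomial ℚ | ∃ s, 2 ≤ s ∧ q = F s} := by
      rw [Polynomial.C_mul']
      exact Submodule.smul_mem _ _ (Submodule.subset_span ⟨sdeg, hs2, rfl⟩)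
    rcases eq_or_ne (p - C c * F sdeg) 0 with hq | hq
    · have : p = C c * F sdeg := by
        have := sub_eq_zero.mp hq
        exact this
      rw [this]
      exact hmemF
    · have hlt : (p - C c * F sdeg).degree < p.degree :=
        Polynomial.degree_sub_lt (hdegp.trans hdegF.symm) hp hlceq
      have hltn : (p - C c * F sdeg).natDegree < d := by
        have := Polynomial.natDegree_lt_natDegree hq hlt
        omega
      have hc0 : (p - C c * F sdeg).coeff 0 = 0 := by
        rw [Polynomial.coeff_sub, hp0, Polynomial.coeff_C_mul, h0 sdeg hs2]
        ring
      have hmem := ih _ hltn _ rfl hc0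
      have : p = (p - C c * F sdeg) + C c * F sdeg := by ring
      rw [this]
      exact Submodule.add_mem _ hmem hmemF


/-- any family of q-analogues with `Q_s(0) = 0`, `Q_s(1) ≠ 0` and
`deg Q_s ≤ s - 1` (for `s ≥ 2`) spans exactly `MD^♯`. -/
theorem span_ZQ_eq_MDsharp (Q : ℕ → Polynomial ℚ)
    (h0 : ∀ s, 2 ≤ s → (Q s).eval 0 = 0)
    (h1 : ∀ s, 2 ≤ s → (Q s).eval 1 ≠ 0)
    (hdeg : ∀ s, 2 ≤ s → (Q s).degree ≤ (s - 1 : ℕ)) :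
    Submodule.span ℚ
        {f | ∃ (l : ℕ) (s : Fin l → ℕ), (∀ j, 2 ≤ s j) ∧ f = ZQ Q l s} = MDsharp := by
  classical
  set SQ : Set (Polynomial ℚ) := {p | ∃ s, 2 ≤ s ∧ p = PP (Q s) s} with hSQ
  set SM : Set (Polynomial ℚ) := {p | ∃ k, 1 ≤ k ∧ p = (X : Polynomial ℚ) ^ k} with hSM
  have genZ : {f | ∃ (l : ℕ) (s : Fin l → ℕ), (∀ j, 2 ≤ s j) ∧ f = ZQ Q l s}
      = {f | ∃ (l : ℕ) (P : Fin l → Polynomial ℚ), (∀ j, P j ∈ SQ) ∧ f = Bk l P} := by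
    ext f
    constructor
    · rintro ⟨l, s, hs, rfl⟩
      exact ⟨l, fun j => PP (Q (s j)) (s j), fun j => ⟨s j, hs j, rfl⟩,
        ZQ_eq Q l s hs (fun j => h0 _ (hs j)) (fun j => hdeg _ (hs j))⟩
    · rintro ⟨l, P, hP, rfl⟩
      choose s hs2 hPs using hP
      refine ⟨l, s, hs2, ?_⟩
      have hPeq : P = fun j => PP (Q (s j)) (s j) := funext hPs
      rw [hPeq]
      exact (ZQ_eq Q l s hs2 (fun j => h0 _ (hs2 j)) (fun j => hdeg _ (hs2 j))).symm
  have hMD : MDsharp = Submodule.span ℚ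
      {f | ∃ (l : ℕ) (P : Fin l → Polynomial ℚ), (∀ j, P j ∈ SM) ∧ f = Bk l P} := by
    apply le_antisymm
    · rw [MDsharp]
      apply Submodule.span_le.mpr
      rintro f ⟨l, s, hs, rfl⟩
      rw [bracket_eq]
      apply Submodule.smul_mem
      apply Submodule.subset_span
      exact ⟨l, fun j => (X : Polynomial ℚ) ^ (s j - 1),
        fun j => ⟨s j - 1, by have := hs j; omega, rfl⟩, rfl⟩
    · apply Submodule.span_le.mpr
      rintro f ⟨l, P, hP, rfl⟩
      choose k hk1 hPk using hP
      set s : Fin l → ℕ := fun j => k j + 1 with hsdef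
      have hs : ∀ j, 2 ≤ s j := fun j => by have := hk1 j; simp [hsdef]; omega
      have hPX : P = fun j => (X : Polynomial ℚ) ^ (s j - 1) := by
        funext j
        rw [hPk j]
        congr 1
      have hc : (∏ j, ((s j - 1).factorial : ℚ)) ≠ 0 := by
        apply Finset.prod_ne_zero_iff.mpr
        intro j _
        positivity
      have hBk : Bk l P = (∏ j, ((s j - 1).factorial : ℚ)) • bracket l s := by
        rw [bracket_eq, smul_smul, mul_inv_cancel₀ hc, one_smul, hPX]
      rw [hBk, MDsharp]
      exact Submodule.smul_mem _ _ (Submodule.subset_span ⟨l, s, hs, rfl⟩)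
  have hFd : ∀ s, 2 ≤ s → (PP (Q s) s).natDegree = s - 1 ∧ PP (Q s) s ≠ 0 :=
    fun s hs => PP_natDegree hs (hdeg s hs) (h1 s hs)
  have hF0 : ∀ s, 2 ≤ s → (PP (Q s) s).coeff 0 = 0 := by
    intro s hs
    rw [Polynomial.coeff_zero_eq_eval_zero]
    have := PP_eval_zero hs (h0 s hs) (hdeg s hs)
    simpa using this
  have hMQ : ∀ p ∈ SM, p ∈ Submodule.span ℚ SQ := by
    rintro p ⟨k, hk, rfl⟩
    apply mem_span_triangular (fun s => PP (Q s) s) hFd hF0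
    rw [Polynomial.coeff_X_pow, if_neg (by omega)]
  have hQM : ∀ p ∈ SQ, p ∈ Submodule.span ℚ SM := by
    rintro p ⟨s, hs, rfl⟩
    exact mem_span_monomials _ (hF0 s hs)
  rw [genZ, hMD]
  apply le_antisymm
  · apply Submodule.span_le.mpr
    rintro f ⟨l, P, hP, rfl⟩
    refine Submodule.span_mono ?_ (Bk_mem_span l SM P (fun j => hQM _ (hP j)))
    rintro g ⟨P', hP', rfl⟩
    exact ⟨l, P', hP', rfl⟩
  · apply Submodule.span_le.mpr
    rintro f ⟨l, P, hP, rfl⟩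
    refine Submodule.span_mono ?_ (Bk_mem_span l SQ P (fun j => hMQ _ (hP j)))
    rintro g ⟨P', hP', rfl⟩
    exact ⟨l, P', hP', rfl⟩
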